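/- Let A(λ), B(λ) ∈ M_{n×n}(ℂ[λ]) be nonsingular matrices that are equivalent, with common Smith normal form S(λ) = diag(s_1(λ), ..., s_{n−1}(λ), s_n(λ)). Let d(λ) = s_1(λ)···s_{n−1}(λ) and let C(λ) be the matrix with B*(λ) = d(λ)·C(λ), where B*(λ) is the adjugate of B(λ). Then A(λ) and B(λ) are semi-scalar equivalent if and only if there exists a nonsingular constant matrix V ∈ M_{n×n}(ℂ) such that s_n(λ) divides every entry of C(λ)·V·A(λ) in ℂ[λ]. -/

import Mathlib

/-!
Since `det B = d·sₙ` up to a unit and `B* = d·C`, cancelling `d` in `B*·B = B·B* = det B · 1`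
gives `C·B = B·C = e·1` with `e` an associate of `sₙ`. If `A = P·B·Q`, then
`C·P⁻¹·A = C·B·Q = e·Q`. Conversely, if `C·V·A = e·Q`, multiplying by `B` on the left and
cancelling `e` gives `B·Q = V·A`, so `A = V⁻¹·B·Q`; comparing determinants, `det Q` is a unit
because `det A` and `det B` are associates (both are associates of `s₁ ⋯ sₙ`).
-/

open Polynomial

theorem Fin.prod_univ_eq_prod_filter_lt_pred_mul {M : Type*} [CommMonoid M] {n : ℕ}
    (f : Fin n → M) (i : Fin n) (hi : (i : ℕ) = n - 1) :
    ∏ j, f j = (∏ j ∈ Finset.univ.filter (fun j : Fin n => (j : ℕ) < n - 1), f j) * f i := by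
  rw [← Finset.prod_erase_mul _ _ (Finset.mem_univ i)]
  congr 1
  refine Finset.prod_congr (Finset.ext fun j => ?_) fun _ _ => rfl
  simp only [Finset.mem_erase, Finset.mem_filter, Finset.mem_univ, and_true, true_and, ne_eq,
    Fin.ext_iff]
  omega

namespace Matrix

variable {ι : Type*} [Fintype ι] [DecidableEq ι]

section CommRing

variable {R : Type*} [CommRing R]

theorem associated_det_prod_of_mul_mul_eq_diagonal {U A V : Matrix ι ι R} {s : ι → R}
    (hU : IsUnit U.det) (hV : IsUnit V.det) (h : U * A * V = diagonal s) :
    Associated A.det (∏ i, s i) := by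
  refine ⟨hU.unit * hV.unit, ?_⟩
  rw [← det_diagonal, ← h, det_mul, det_mul, Units.val_mul, IsUnit.unit_spec, IsUnit.unit_spec]
  ring

theorem map_nonsing_inv_mul_map {S : Type*} [CommRing S] (f : R →+* S) {P : Matrix ι ι R}
    (hP : IsUnit P.det) : P⁻¹.map f * P.map f = 1 := by
  rw [← Matrix.map_mul, nonsing_inv_mul P hP, Matrix.map_one _ (map_zero f) (map_one f)]

variable [IsDomain R] {B C : Matrix ι ι R} {d e : R}

theorem mul_eq_smul_one_of_adjugate_eq_smul (hd : d ≠ 0) (hadj : B.adjugate = d • C)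
    (hdet : B.det = d * e) : C * B = e • 1 := by
  apply smul_right_injective _ hd
  dsimp only
  rw [← smul_mul, ← hadj, adjugate_mul, hdet, smul_smul]

theorem mul_eq_smul_one_of_adjugate_eq_smul' (hd : d ≠ 0) (hadj : B.adjugate = d • C)
    (hdet : B.det = d * e) : B * C = e • 1 := by
  apply smul_right_injective _ hd
  dsimp only
  rw [← Matrix.mul_smul, ← hadj, mul_adjugate, hdet, smul_smul]

end CommRing

variable {K : Type*} [Field K] {A B C : Matrix ι ι K[X]} {e : K[X]}

theorem mul_map_inv_mul_eq_smul_of_eq_map_mul_mul {P : Matrix ι ι K} {Q : Matrix ι ι K[X]}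
    (hCB : C * B = e • 1) (hP : IsUnit P.det) (hA : A = P.map Polynomial.C * B * Q) :
    C * P⁻¹.map Polynomial.C * A = e • Q := by
  rw [hA, Matrix.mul_assoc C, ← Matrix.mul_assoc _ _ Q, ← Matrix.mul_assoc _ _ B,
    map_nonsing_inv_mul_map _ hP, Matrix.one_mul, ← Matrix.mul_assoc, hCB, smul_mul,
    Matrix.one_mul]

theorem isUnit_det_and_eq_map_inv_mul_mul_of_mul_map_mul_eq_smul {V : Matrix ι ι K}
    {Q : Matrix ι ι K[X]} (he : e ≠ 0) (hB : B.det ≠ 0) (hAB : Associated A.det B.det)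
    (hBC : B * C = e • 1) (hV : V.det ≠ 0) (hQ : C * V.map Polynomial.C * A = e • Q) :
    IsUnit Q.det ∧ A = V⁻¹.map Polynomial.C * B * Q := by
  have hVu : IsUnit V.det := hV.isUnit
  have hBQ : B * Q = V.map Polynomial.C * A := by
    apply smul_right_injective _ he
    simp only
    rw [← Matrix.mul_smul, ← hQ, Matrix.mul_assoc C, ← Matrix.mul_assoc, hBC, smul_mul, Matrix.one_mul]
  obtain ⟨w, hw⟩ := hAB
  have hdet : B.det * Q.det = B.det * (Polynomial.C V.det * ↑w⁻¹) := by
    rw [← det_mul, hBQ, det_mul, ← RingHom.mapMatrix_apply, ← RingHom.map_det, ← hw,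
      mul_mul_mul_comm, Units.mul_inv, mul_one, mul_comm]
  refine ⟨?_, ?_⟩
  · rw [mul_left_cancel₀ hB hdet]
    exact (Polynomial.isUnit_C.mpr hVu).mul w⁻¹.isUnit
  · rw [Matrix.mul_assoc, hBQ, ← Matrix.mul_assoc, map_nonsing_inv_mul_map _ hVu,
      Matrix.one_mul]

theorem exists_semiScalar_iff_exists_dvd (he : e ≠ 0) (hB : B.det ≠ 0)
    (hAB : Associated A.det B.det) (hCB : C * B = e • 1) (hBC : B * C = e • 1) :
    (∃ P : Matrix ι ι K, IsUnit P.det ∧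
      ∃ Q : Matrix ι ι K[X], IsUnit Q.det ∧ A = P.map Polynomial.C * B * Q) ↔
    ∃ V : Matrix ι ι K, V.det ≠ 0 ∧ ∀ p q, e ∣ (C * V.map Polynomial.C * A) p q := by
  constructor
  · rintro ⟨P, hP, Q, -, hA⟩
    refine ⟨P⁻¹, (isUnit_nonsing_inv_det P hP).ne_zero, fun p q => ⟨Q p q, ?_⟩⟩
    rw [mul_map_inv_mul_eq_smul_of_eq_map_mul_mul hCB hP hA, smul_apply, smul_eq_mul]
  · rintro ⟨V, hV, hdvd⟩
    choose Q hQ using hdvd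
    obtain ⟨hQu, hA⟩ := isUnit_det_and_eq_map_inv_mul_mul_of_mul_map_mul_eq_smul he hB hAB hBC
      hV (Q := of Q) (ext hQ)
    exact ⟨V⁻¹, isUnit_nonsing_inv_det V hV.isUnit, of Q, hQu, hA⟩

end Matrix

/-- **Corollary 3.1.** Let `A(λ), B(λ)` be nonsingular `n × n` matrices over `ℂ[λ]` that
are equivalent, with common Smith normal form `diag(s₁, …, sₙ)`. Let `d = s₁ ⋯ s_{n-1}`
and write `B*(λ) = d(λ)·C(λ)`. Then `A(λ)` and `B(λ)` are semi-scalar equivalent iff there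
exists a nonsingular constant matrix `V` such that `sₙ(λ)` divides every entry of
`C(λ)·V·A(λ)` in `ℂ[λ]`. -/
theorem semi_scalar_equivalent_iff_exists_nonsingular_solution_complex
    {n : ℕ} (hn : 1 ≤ n)
    (A B : Matrix (Fin n) (Fin n) ℂ[X]) (hB : B.det ≠ 0)
    (s : Fin n → ℂ[X])
    (hsmithA : ∃ U V : Matrix (Fin n) (Fin n) ℂ[X],
      IsUnit U.det ∧ IsUnit V.det ∧ U * A * V = Matrix.diagonal s)
    (hsmithB : ∃ U V : Matrix (Fin n) (Fin n) ℂ[X],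
      IsUnit U.det ∧ IsUnit V.det ∧ U * B * V = Matrix.diagonal s)
    (d : ℂ[X]) (hd : d = ∏ i ∈ Finset.univ.filter (fun i : Fin n => (i : ℕ) < n - 1), s i)
    (Cm : Matrix (Fin n) (Fin n) ℂ[X]) (hCm : ∀ p q, B.adjugate p q = d * Cm p q) :
    (∃ P : Matrix (Fin n) (Fin n) ℂ, IsUnit P.det ∧
      ∃ Q : Matrix (Fin n) (Fin n) ℂ[X], IsUnit Q.det ∧
        A = P.map Polynomial.C * B * Q) ↔
    (∃ V : Matrix (Fin n) (Fin n) ℂ, V.det ≠ 0 ∧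
      ∀ p q : Fin n, s ⟨n - 1, by omega⟩ ∣ (Cm * V.map Polynomial.C * A) p q) := by
  obtain ⟨UA, VA, hUA, hVA, hUAV⟩ := hsmithA
  obtain ⟨UB, VB, hUB, hVB, hUBV⟩ := hsmithB
  set sₙ := s ⟨n - 1, by omega⟩
  have hprod : ∏ i, s i = d * sₙ := hd ▸ Fin.prod_univ_eq_prod_filter_lt_pred_mul s _ rfl
  have hAdet := Matrix.associated_det_prod_of_mul_mul_eq_diagonal hUA hVA hUAV
  have hBdet := Matrix.associated_det_prod_of_mul_mul_eq_diagonal hUB hVB hUBV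
  have hAB := hAdet.trans hBdet.symm
  obtain ⟨w, hw⟩ := hBdet
  have hBde : B.det = d * (sₙ * ↑w⁻¹) := by
    rw [← mul_assoc, ← hprod, ← hw, Units.mul_inv_cancel_right]
  have hadj : B.adjugate = d • Cm := Matrix.ext fun p q => hCm p q
  have hd0 : d ≠ 0 := left_ne_zero_of_mul (hBde ▸ hB)
  rw [Matrix.exists_semiScalar_iff_exists_dvd (right_ne_zero_of_mul (hBde ▸ hB)) hB
    hAB (Matrix.mul_eq_smul_one_of_adjugate_eq_smul hd0 hadj hBde)
    (Matrix.mul_eq_smul_one_of_adjugate_eq_smul' hd0 hadj hBde)]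
  simp_rw [(associated_mul_unit_left sₙ _ w⁻¹.isUnit).dvd_iff_dvd_left]
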